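/- arXiv:2111.07636 — 2 statements merged into one kernel-verified Lean document; each statement's English description precedes it below -/
import Mathlib

section
/- For a pure state ψ of N qudits and any strictly positive weights p(B) > 0 over subsets B of size k, the weighted renormalized state ρ_k = Σ_{|B|=k} p(B) ρ_{B̄} has image equal to W_k^ψ; in particular its rank is independent of the choice of positive weights. -/
noncomputable section

open Matrix

/-- An operator on `N` qudits (Hilbert space modeled as functions `(ι → Fin d) → ℂ`)
is *supported on* the set of sites `B` if it has the form `O_B ⊗ I_{B̄}`:
its matrix elements vanish unless the configurations agree off `B`, and they do not
depend on the (common) configuration off `B`. -/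
def SupportedOn {ι : Type*} [DecidableEq ι] (d : ℕ) (B : Finset ι)
    (M : Matrix (ι → Fin d) (ι → Fin d) ℂ) : Prop :=
  (∀ x y : ι → Fin d, (∃ i ∉ B, x i ≠ y i) → M x y = 0) ∧
  (∀ x y z z' : ι → Fin d,
    M (fun i => if i ∈ B then x i else z i) (fun i => if i ∈ B then y i else z i) =
    M (fun i => if i ∈ B then x i else z' i) (fun i => if i ∈ B then y i else z' i))

/-- `V^k`: the span of operators supported on at most `k` sites (the `k`-local operators). -/
def Vk (ι : Type*) [DecidableEq ι] (d k : ℕ) :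
    Submodule ℂ (Matrix (ι → Fin d) (ι → Fin d) ℂ) :=
  Submodule.span ℂ {M | ∃ B : Finset ι, B.card ≤ k ∧ SupportedOn d B M}

/-- `W_k^ψ = Span{Oψ : O ∈ V^k}`. -/
def Wk {ι : Type*} [Fintype ι] [DecidableEq ι] {d : ℕ} (ψ : (ι → Fin d) → ℂ) (k : ℕ) :
    Submodule ℂ ((ι → Fin d) → ℂ) :=
  Submodule.span ℂ {v | ∃ M ∈ Vk ι d k, v = M.mulVec ψ}

/-- `dim W_k^ψ`. -/
def dimW {ι : Type*} [Fintype ι] [DecidableEq ι] {d : ℕ} (ψ : (ι → Fin d) → ℂ) (k : ℕ) : ℕ :=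
  Module.finrank ℂ (Wk ψ k)

/-- `dim ΔW_k^ψ = dim W_k^ψ − dim W_{k−1}^ψ` (with `W_{−1} = 0`), as an integer. -/
def deltaDimW {ι : Type*} [Fintype ι] [DecidableEq ι] {d : ℕ} (ψ : (ι → Fin d) → ℂ)
    (k : ℕ) : ℤ :=
  (dimW ψ k : ℤ) - if k = 0 then 0 else (dimW ψ (k - 1) : ℤ)

/-- The entanglement polynomial `f(ψ) = Σ_k (dim ΔW_k^ψ) x^k ∈ ℤ[x]`. -/
def entPoly {ι : Type*} [Fintype ι] [DecidableEq ι] {d : ℕ} (ψ : (ι → Fin d) → ℂ) :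
    Polynomial ℤ :=
  ∑ k ∈ Finset.range (Fintype.card ι + 1), Polynomial.C (deltaDimW ψ k) * Polynomial.X ^ k

/-- Tensor product of states of two disjoint sets of qudits. -/
def tens {ι₁ ι₂ : Type*} {d : ℕ} (ψ : (ι₁ → Fin d) → ℂ) (φ : (ι₂ → Fin d) → ℂ) :
    (ι₁ ⊕ ι₂ → Fin d) → ℂ :=
  fun x => ψ (fun i => x (Sum.inl i)) * φ (fun j => x (Sum.inr j))

end

noncomputable section

/-- `ρ_{B̄} = (I_B/d_B) ⊗ tr_B(ρ)`, viewed as an operator on the full Hilbert space: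
the state obtained from `ρ` by tracing out (Haar-twirling) the sites in `B` and tensoring
with the normalized identity on `B`. -/
def redState {N : ℕ} (d : ℕ) (B : Finset (Fin N))
    (ρ : Matrix (Fin N → Fin d) (Fin N → Fin d) ℂ) :
    Matrix (Fin N → Fin d) (Fin N → Fin d) ℂ :=
  Matrix.of fun x y =>
    if ∀ i ∈ B, x i = y i then
      ((d : ℂ) ^ B.card)⁻¹ *
        ∑ w : {i // i ∈ B} → Fin d,
          ρ (fun i => if h : i ∈ B then w ⟨i, h⟩ else x i)
            (fun i => if h : i ∈ B then w ⟨i, h⟩ else y i)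
    else 0

/-- The pure state density matrix `|ψ⟩⟨ψ|`. -/
def pureMat {N d : ℕ} (ψ : (Fin N → Fin d) → ℂ) :
    Matrix (Fin N → Fin d) (Fin N → Fin d) ℂ :=
  Matrix.of fun x y => ψ x * star (ψ y)

end

-- ==================== AUX ====================
noncomputable section AuxProof

open Matrix

variable {N d : ℕ}

def mrg (B : Finset (Fin N)) (w : {i // i ∈ B} → Fin d) (x : Fin N → Fin d) :
    Fin N → Fin d := fun i => if h : i ∈ B then w ⟨i, h⟩ else x i

def rst (B : Finset (Fin N)) (x : Fin N → Fin d) : {i // i ∈ B} → Fin d :=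
  fun i => x i.1

lemma rst_mrg (B : Finset (Fin N)) (w : {i // i ∈ B} → Fin d) (x : Fin N → Fin d) :
    rst B (mrg B w x) = w := by
  funext i; simp [rst, mrg, i.2]

lemma mrg_rst (B : Finset (Fin N)) (x : Fin N → Fin d) : mrg B (rst B x) x = x := by
  funext i; by_cases h : i ∈ B <;> simp [rst, mrg, h]

lemma mrg_apply_notMem {B : Finset (Fin N)} {i : Fin N} (h : i ∉ B)
    (w : {i // i ∈ B} → Fin d) (x : Fin N → Fin d) : mrg B w x i = x i := by
  simp [mrg, h]

lemma mrg_injective (B : Finset (Fin N)) (x : Fin N → Fin d) :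
    Function.Injective (fun w : {i // i ∈ B} → Fin d => mrg B w x) := by
  intro a b h
  funext i
  have := congrFun h i.1
  simpa [mrg, i.2] using this

def fcol (ψ : (Fin N → Fin d) → ℂ) (B : Finset (Fin N)) (v w : {i // i ∈ B} → Fin d) :
    (Fin N → Fin d) → ℂ :=
  fun x => (if rst B x = v then 1 else 0) * ψ (mrg B w x)

def Ecol (B : Finset (Fin N)) (v w : {i // i ∈ B} → Fin d) :
    Matrix (Fin N → Fin d) (Fin N → Fin d) ℂ :=
  Matrix.of fun x y => if rst B x = v ∧ y = mrg B w x then 1 else 0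

lemma Ecol_mulVec (ψ : (Fin N → Fin d) → ℂ) (B : Finset (Fin N))
    (v w : {i // i ∈ B} → Fin d) :
    (Ecol B v w).mulVec ψ = fcol ψ B v w := by
  funext x
  simp only [Matrix.mulVec, dotProduct, Ecol, Matrix.of_apply, fcol]
  rw [Finset.sum_eq_single (mrg B w x)]
  · by_cases h : rst B x = v <;> simp [h]
  · intro y _ hy
    rw [if_neg, zero_mul]
    rintro ⟨-, rfl⟩
    exact hy rfl
  · intro h; exact absurd (Finset.mem_univ _) h

lemma supportedOn_Ecol (B : Finset (Fin N)) (v w : {i // i ∈ B} → Fin d) :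
    SupportedOn d B (Ecol B v w) := by
  constructor
  · rintro x y ⟨i, hi, hxy⟩
    rw [Ecol, Matrix.of_apply, if_neg]
    rintro ⟨-, rfl⟩
    exact hxy (mrg_apply_notMem hi w x).symm
  · intro x y z z'
    have h1 : ∀ x z : Fin N → Fin d,
        rst B (fun i => if i ∈ B then x i else z i) = rst B x := by
      intro x z; funext i; simp [rst, i.2]
    have h2 : ∀ (y x z : Fin N → Fin d),
        ((fun i => if i ∈ B then y i else z i)
          = mrg B w (fun i => if i ∈ B then x i else z i))
        ↔ ∀ i : {j // j ∈ B}, y i.1 = w i := by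
      intro y x z
      rw [funext_iff]
      constructor
      · intro h i
        have := h i.1
        simpa [mrg, i.2] using this
      · intro h i
        by_cases hi : i ∈ B
        · simpa [mrg, hi] using h ⟨i, hi⟩
        · simp [mrg, hi]
    simp only [Ecol, Matrix.of_apply, h1, h2]

lemma SupportedOn.mono {B B' : Finset (Fin N)} {M : Matrix (Fin N → Fin d) (Fin N → Fin d) ℂ}
    (hM : SupportedOn d B' M) (hBB : B' ⊆ B) : SupportedOn d B M := by
  obtain ⟨hM1, hM2⟩ := hM
  constructor
  · exact fun x y ⟨i, hi, hxy⟩ => hM1 x y ⟨i, fun h => hi (hBB h), hxy⟩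
  · intro x y z z'
    by_cases hagree : ∀ i ∈ B, i ∉ B' → x i = y i
    · have key : ∀ z : Fin N → Fin d,
          M (fun i => if i ∈ B then x i else z i) (fun i => if i ∈ B then y i else z i)
          = M (fun i => if i ∈ B' then x i else (fun j => if j ∈ B then x j else z j) i)
              (fun i => if i ∈ B' then y i else (fun j => if j ∈ B then x j else z j) i) := by
        intro z
        congr 1
        · funext i
          by_cases h' : i ∈ B'
          · simp [h', hBB h']
          · simp [h']
        · funext i
          by_cases h' : i ∈ B'
          · simp [h', hBB h']
          · by_cases h : i ∈ B
            · simp [h', h, hagree i h h']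
            · simp [h', h]
      rw [key z, key z']
      exact hM2 x y _ _
    · push_neg at hagree
      obtain ⟨i, hiB, hiB', hxy⟩ := hagree
      rw [hM1 _ _ ⟨i, hiB', by simp [hiB, hxy]⟩, hM1 _ _ ⟨i, hiB', by simp [hiB, hxy]⟩]

lemma mulVec_eq_sum_fcol (ψ : (Fin N → Fin d) → ℂ) (z₀ : Fin N → Fin d)
    {B : Finset (Fin N)} {M : Matrix (Fin N → Fin d) (Fin N → Fin d) ℂ}
    (hM : SupportedOn d B M) :
    M.mulVec ψ = ∑ v : {i // i ∈ B} → Fin d, ∑ w : {i // i ∈ B} → Fin d,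
      M (mrg B v z₀) (mrg B w z₀) • fcol ψ B v w := by
  have e1 : ∀ (a : {i // i ∈ B} → Fin d) (z z' : Fin N → Fin d),
      (fun i => if i ∈ B then mrg B a z i else z' i) = mrg B a z' := by
    intro a z z'
    funext i
    by_cases h : i ∈ B <;> simp [mrg, h]
  have key : ∀ (v w : {i // i ∈ B} → Fin d) (x : Fin N → Fin d),
      M (mrg B v z₀) (mrg B w z₀) = M (mrg B v x) (mrg B w x) := by
    intro v w x
    have h := hM.2 (mrg B v z₀) (mrg B w z₀) z₀ x
    rwa [e1, e1, e1, e1] at h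
  funext x
  have himg : ∑ y : Fin N → Fin d, M x y * ψ y
      = ∑ w : {i // i ∈ B} → Fin d, M x (mrg B w x) * ψ (mrg B w x) := by
    rw [← Finset.sum_image (f := fun y => M x y * ψ y)
      (g := fun w : {i // i ∈ B} → Fin d => mrg B w x) (s := Finset.univ)
      (fun a _ b _ h => mrg_injective B x h)]
    refine (Finset.sum_subset (Finset.subset_univ _) ?_).symm
    intro y _ hy
    have hne : ∃ i ∉ B, x i ≠ y i := by
      by_contra hcon
      push_neg at hcon
      apply hy
      rw [Finset.mem_image]
      refine ⟨rst B y, Finset.mem_univ _, ?_⟩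
      funext i
      by_cases h : i ∈ B
      · simp [mrg, rst, h]
      · simp [mrg, h, hcon i h]
    rw [hM.1 x y hne, zero_mul]
  simp only [Matrix.mulVec, dotProduct] at *
  rw [himg]
  simp only [Finset.sum_apply, Pi.smul_apply, fcol, smul_eq_mul]
  have hv : ∀ v : {i // i ∈ B} → Fin d,
      (∑ w : {i // i ∈ B} → Fin d,
        M (mrg B v z₀) (mrg B w z₀) * ((if rst B x = v then 1 else 0) * ψ (mrg B w x)))
      = if rst B x = v then
          (∑ w : {i // i ∈ B} → Fin d, M (mrg B v z₀) (mrg B w z₀) * ψ (mrg B w x)) else 0 := by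
    intro v
    by_cases h : rst B x = v <;> simp [h]
  rw [Finset.sum_congr rfl fun v _ => hv v, Finset.sum_ite_eq]
  simp only [Finset.mem_univ, if_true]
  refine Finset.sum_congr rfl fun w _ => ?_
  rw [key (rst B x) w x, mrg_rst]

end AuxProof

noncomputable section GramProof

open Matrix ComplexOrder

variable {N d : ℕ}

abbrev Jty (N d k : ℕ) :=
  Σ S : {S : Finset (Fin N) // S ∈ Finset.powersetCard k Finset.univ},
    ({i // i ∈ S.1} → Fin d) × ({i // i ∈ S.1} → Fin d)

def Amat (N d k : ℕ) (ψ : (Fin N → Fin d) → ℂ) (p : Finset (Fin N) → ℝ) :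
    Matrix (Fin N → Fin d) (Jty N d k) ℂ :=
  Matrix.of fun x j =>
    ((Real.sqrt (p j.1.1 / (d : ℝ) ^ k) : ℝ) : ℂ) * fcol ψ j.1.1 j.2.1 j.2.2 x

lemma sum_redState_eq (N d k : ℕ) (ψ : (Fin N → Fin d) → ℂ) (p : Finset (Fin N) → ℝ)
    (hp : ∀ B ∈ Finset.powersetCard k (Finset.univ : Finset (Fin N)), 0 ≤ p B) :
    (∑ B ∈ Finset.powersetCard k (Finset.univ : Finset (Fin N)),
        (p B : ℂ) • redState d B (pureMat ψ))
      = Amat N d k ψ p * (Amat N d k ψ p)ᴴ := by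
  ext x y
  rw [Matrix.mul_apply]
  have hsig : ∑ j : Jty N d k, Amat N d k ψ p x j * (Amat N d k ψ p)ᴴ j y
      = ∑ S : {S : Finset (Fin N) // S ∈ Finset.powersetCard k Finset.univ},
          ∑ vw : ({i // i ∈ S.1} → Fin d) × ({i // i ∈ S.1} → Fin d),
            Amat N d k ψ p x ⟨S, vw⟩ * (Amat N d k ψ p)ᴴ ⟨S, vw⟩ y := by
    rw [← Finset.univ_sigma_univ, Finset.sum_sigma]
  rw [hsig]
  rw [Matrix.sum_apply, ← Finset.sum_coe_sort (Finset.powersetCard k Finset.univ)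
    (fun B => ((p B : ℂ) • redState d B (pureMat ψ)) x y)]
  refine Finset.sum_congr rfl fun S _ => ?_
  obtain ⟨B, hB⟩ := S
  have hcard : B.card = k := (Finset.mem_powersetCard.mp hB).2
  have hple : (0:ℝ) ≤ p B / (d:ℝ)^k := div_nonneg (hp B hB) (by positivity)
  have hcc : ((Real.sqrt (p B / (d : ℝ) ^ k) : ℝ) : ℂ)
      * ((Real.sqrt (p B / (d : ℝ) ^ k) : ℝ) : ℂ) = (p B : ℂ) / ((d : ℂ) ^ k) := by
    rw [← Complex.ofReal_mul, Real.mul_self_sqrt hple]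
    push_cast
    ring
  have hterm : ∀ vw : ({i // i ∈ B} → Fin d) × ({i // i ∈ B} → Fin d),
      Amat N d k ψ p x ⟨⟨B, hB⟩, vw⟩ * (Amat N d k ψ p)ᴴ ⟨⟨B, hB⟩, vw⟩ y
      = (if rst B x = vw.1 then 1 else 0) * ((if rst B y = vw.1 then 1 else 0) *
          ((p B : ℂ) / ((d : ℂ) ^ k) * (ψ (mrg B vw.2 x) * star (ψ (mrg B vw.2 y))))) := by
    rintro ⟨v, w⟩
    simp only [Amat, Matrix.conjTranspose_apply, Matrix.of_apply, fcol, star_mul',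
      Complex.star_def, Complex.conj_ofReal]
    rw [← hcc]
    by_cases h1 : rst B x = v <;> by_cases h2 : rst B y = v <;>
      simp [h1, h2, RCLike.star_def] <;> ring
  rw [Fintype.sum_prod_type]
  simp only [hterm, boole_mul]
  rw [Finset.sum_comm]
  simp only [Finset.sum_ite_eq, Finset.mem_univ, if_true]
  -- now LHS : (p B • redState ...) x y
  simp only [Pi.smul_apply, Matrix.smul_apply, smul_eq_mul]
  rw [redState]
  have hcond : (∀ i ∈ B, x i = y i) ↔ rst B y = rst B x := by
    constructor
    · intro h; funext i; exact (h i.1 i.2).symm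
    · intro h i hi; exact (congrFun h ⟨i, hi⟩).symm
  by_cases hxy : rst B y = rst B x
  · rw [Matrix.of_apply, if_pos (hcond.mpr hxy), hcard]
    simp only [if_pos hxy]
    simp only [pureMat, Matrix.of_apply]
    have hw : ∀ w : {i // i ∈ B} → Fin d,
        ψ (fun i => if h : i ∈ B then w ⟨i, h⟩ else x i)
          * star (ψ (fun i => if h : i ∈ B then w ⟨i, h⟩ else y i))
        = ψ (mrg B w x) * star (ψ (mrg B w y)) := fun w => rfl
    rw [Finset.mul_sum, Finset.mul_sum]
    refine Finset.sum_congr rfl fun w _ => ?_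
    rw [hw]
    rw [div_eq_mul_inv]
    ring
  · rw [Matrix.of_apply, if_neg (fun h => hxy (hcond.mp h)), mul_zero]
    simp only [if_neg hxy, Finset.sum_const_zero]

end GramProof

noncomputable section SpanProof

open Matrix ComplexOrder

lemma span_cols_eq_Wk (N d k : ℕ) (hk : k ≤ N) [Nonempty (Fin N → Fin d)]
    (ψ : (Fin N → Fin d) → ℂ) (p : Finset (Fin N) → ℝ)
    (hp : ∀ B : Finset (Fin N), B.card = k → 0 < p B) (hdk : (0:ℝ) < (d:ℝ)^k) :
    Submodule.span ℂ (Set.range (Amat N d k ψ p)ᵀ) = Wk ψ k := by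
  have hc : ∀ B ∈ Finset.powersetCard k (Finset.univ : Finset (Fin N)),
      ((Real.sqrt (p B / (d:ℝ)^k) : ℝ) : ℂ) ≠ 0 := by
    intro B hB
    have hcard : B.card = k := (Finset.mem_powersetCard.mp hB).2
    have : 0 < p B / (d:ℝ)^k := div_pos (hp _ hcard) hdk
    exact_mod_cast (Real.sqrt_pos.mpr this).ne'
  have hcol : ∀ j : Jty N d k, (Amat N d k ψ p)ᵀ j
      = ((Real.sqrt (p j.1.1 / (d:ℝ)^k) : ℝ) : ℂ) • fcol ψ j.1.1 j.2.1 j.2.2 := by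
    intro j; funext x
    simp [Amat, Matrix.transpose_apply, Pi.smul_apply, smul_eq_mul]
  set T := Submodule.span ℂ (Set.range (Amat N d k ψ p)ᵀ) with hT
  have hfT : ∀ (B : Finset (Fin N)) (hB : B ∈ Finset.powersetCard k Finset.univ)
      (v w : {i // i ∈ B} → Fin d), fcol ψ B v w ∈ T := by
    intro B hB v w
    have hmem : (Amat N d k ψ p)ᵀ (⟨⟨B, hB⟩, v, w⟩ : Jty N d k) ∈ T :=
      Submodule.subset_span ⟨⟨⟨B, hB⟩, v, w⟩, rfl⟩
    have := T.smul_mem (((Real.sqrt (p B / (d:ℝ)^k) : ℝ) : ℂ))⁻¹ hmem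
    rwa [hcol, smul_smul, inv_mul_cancel₀ (hc B hB), one_smul] at this
  apply le_antisymm
  · rw [hT, Submodule.span_le]
    rintro _ ⟨j, rfl⟩
    rw [hcol]
    apply Submodule.smul_mem
    rw [← Ecol_mulVec]
    refine Submodule.subset_span ⟨Ecol j.1.1 j.2.1 j.2.2, Submodule.subset_span
      ⟨j.1.1, le_of_eq (Finset.mem_powersetCard.mp j.1.2).2, supportedOn_Ecol _ _ _⟩, rfl⟩
  · rw [Wk, Submodule.span_le]
    rintro _ ⟨M, hM, rfl⟩
    simp only [SetLike.mem_coe]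
    refine Submodule.span_induction ?_ ?_ ?_ ?_ hM
      (p := fun M _ => M.mulVec ψ ∈ T)
    · rintro M ⟨B', hB'le, hsup⟩
      obtain ⟨B, hBB, hBu, hBcard⟩ :=
        Finset.exists_subsuperset_card_eq (Finset.subset_univ B') hB'le
          (by simpa [Finset.card_univ] using hk)
      have hB : B ∈ Finset.powersetCard k Finset.univ :=
        Finset.mem_powersetCard.mpr ⟨hBu, hBcard⟩
      have hsupB : SupportedOn d B M := hsup.mono hBB
      rw [mulVec_eq_sum_fcol ψ (Classical.arbitrary _) hsupB]
      exact Submodule.sum_mem _ fun v _ => Submodule.sum_mem _ fun w _ =>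
        Submodule.smul_mem _ _ (hfT B hB v w)
    · simp [Matrix.zero_mulVec, Submodule.zero_mem]
    · intro M₁ M₂ _ _ h1 h2
      rw [Matrix.add_mulVec]
      exact Submodule.add_mem _ h1 h2
    · intro a M' _ h
      rw [Matrix.smul_mulVec]
      exact Submodule.smul_mem _ _ h

end SpanProof


open Matrix in
/-- For a pure state `ψ` of `N` qudits and any strictly positive weights
`p(B) > 0` over the size-`k` subsets `B`, the weighted renormalized state
`ρ_k = Σ_{|B|=k} p(B) ρ_{B̄}` has image equal to `W_k^ψ`; in particular its rank is
independent of the choice of the positive weights. -/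
theorem range_weighted_renormState_eq_Wk {N d k : ℕ} (hk : k ≤ N)
    (ψ : (Fin N → Fin d) → ℂ)
    (hψ : ∑ x : Fin N → Fin d, star (ψ x) * ψ x = 1)
    (p : Finset (Fin N) → ℝ) (hp : ∀ B : Finset (Fin N), B.card = k → 0 < p B) :
    LinearMap.range
        (∑ B ∈ Finset.powersetCard k (Finset.univ : Finset (Fin N)),
            (p B : ℂ) • redState d B (pureMat ψ)).mulVecLin = Wk ψ k := by
  rcases isEmpty_or_nonempty (Fin N → Fin d) with hE | hNE
  · haveI : Subsingleton ((Fin N → Fin d) → ℂ) :=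
      ⟨fun f g => funext fun x => (hE.false x).elim⟩
    exact Subsingleton.elim _ _
  · have hdk : (0:ℝ) < (d:ℝ)^k := by
      rcases Nat.eq_zero_or_pos k with rfl | hkpos
      · simpa using one_pos
      · have hd : 0 < d := by
          obtain ⟨x⟩ := hNE
          exact lt_of_le_of_lt (Nat.zero_le _) (x ⟨0, lt_of_lt_of_le hkpos hk⟩).isLt
        exact pow_pos (by exact_mod_cast hd) k
    rw [sum_redState_eq N d k ψ p
      (fun B hB => (hp B (Finset.mem_powersetCard.mp hB).2).le)]
    have h2 : LinearMap.range (Amat N d k ψ p * (Amat N d k ψ p)ᴴ).mulVecLin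
        = LinearMap.range (Amat N d k ψ p).mulVecLin := by
      open ComplexOrder in
      apply Submodule.eq_of_le_of_finrank_eq
      · rintro _ ⟨v, rfl⟩
        exact ⟨(Amat N d k ψ p)ᴴ.mulVec v, by
          simp [Matrix.mulVecLin_apply, Matrix.mulVec_mulVec]⟩
      · have := Matrix.rank_self_mul_conjTranspose (Amat N d k ψ p)
        simpa [Matrix.rank] using this
    rw [h2, Matrix.range_mulVecLin]
    exact span_cols_eq_Wk N d k hk ψ p hp hdk
end

section
/- For the three-qubit W state (|100⟩+|010⟩+|001⟩)/√3, the entanglement polynomial is 1 + 6x + x²: dim W_0 = 1, dim W_1 = 7, dim W_2 = 8; in particular 1-local operators acting on the W state span only a 7-dimensional subspace of (ℂ²)^{⊗3}. -/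
noncomputable section EntAux
open Matrix Finset

abbrev F3 := Fin 3 → Fin 2

def dlt (a : F3) : F3 → ℂ := fun x => if x = a then 1 else 0

def wpsi (c : ℂ) : F3 → ℂ := fun y => if (∑ i, (y i : ℕ)) = 1 then c else 0

def applyVec (ψ : F3 → ℂ) : Matrix F3 F3 ℂ →ₗ[ℂ] (F3 → ℂ) where
  toFun M := M.mulVec ψ
  map_add' M N := Matrix.add_mulVec M N ψ
  map_smul' r M := Matrix.smul_mulVec r M ψ

theorem mulVec_formula {P : F3 → F3 → Prop} [∀ x y, Decidable (P x y)] (c : ℂ) (v : F3 → ℕ)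
    (h : ∀ x, (Finset.univ.filter fun y => P x y ∧ (∑ i, (y i : ℕ)) = 1).card = v x) :
    (Matrix.of fun x y => if P x y then (1:ℂ) else 0).mulVec (wpsi c)
      = fun x => (v x : ℂ) * c := by
  funext x
  rw [← h x]
  simp only [Matrix.mulVec, dotProduct, Matrix.of_apply, wpsi, ite_mul, one_mul, zero_mul]
  simp_rw [← ite_and]
  rw [← Finset.sum_filter, Finset.sum_const, nsmul_eq_mul]

def M1 (i : Fin 3) (a b : Fin 2) : Matrix F3 F3 ℂ :=
  Matrix.of fun x y => if x i = a ∧ y i = b ∧ (∀ j, j ≠ i → x j = y j) then 1 else 0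

def M2 : Matrix F3 F3 ℂ :=
  Matrix.of fun x y =>
    if x 0 = 1 ∧ x 1 = 1 ∧ y 0 = 0 ∧ y 1 = 0 ∧ x 2 = y 2 then 1 else 0

theorem supp_M1 (i : Fin 3) (a b : Fin 2) : SupportedOn 2 {i} (M1 i a b) := by
  constructor
  · rintro x y ⟨j, hj, hne⟩
    rw [Finset.mem_singleton] at hj
    simp only [M1, Matrix.of_apply]
    rw [if_neg]
    rintro ⟨-, -, h3⟩; exact hne (h3 j hj)
  · intro x y z z'
    have key : ∀ u : F3, M1 i a b (fun j => if j ∈ ({i}:Finset (Fin 3)) then x j else u j)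
        (fun j => if j ∈ ({i}:Finset (Fin 3)) then y j else u j)
        = if x i = a ∧ y i = b then 1 else 0 := by
      intro u
      simp only [M1, Matrix.of_apply]
      refine if_congr ?_ rfl rfl
      simp only [Finset.mem_singleton]
      constructor
      · rintro ⟨h1, h2, -⟩
        exact ⟨by simpa using h1, by simpa using h2⟩
      · rintro ⟨h1, h2⟩
        exact ⟨by simpa using h1, by simpa using h2, fun j hj => by simp [hj]⟩
    rw [key z, key z']

theorem supp_M2 : SupportedOn 2 {0,1} M2 := by
  have hj2 : ∀ j : Fin 3, j ∉ ({0,1} : Finset (Fin 3)) → j = 2 := by decide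
  constructor
  · rintro x y ⟨j, hj, hne⟩
    have := hj2 j hj; subst this
    simp only [M2, Matrix.of_apply]
    rw [if_neg]
    rintro ⟨-, -, -, -, h5⟩; exact hne h5
  · intro x y z z'
    have h0 : (0:Fin 3) ∈ ({0,1} : Finset (Fin 3)) := by decide
    have h1 : (1:Fin 3) ∈ ({0,1} : Finset (Fin 3)) := by decide
    have h2 : (2:Fin 3) ∉ ({0,1} : Finset (Fin 3)) := by decide
    have key : ∀ u : F3, M2 (fun j => if j ∈ ({0,1}:Finset (Fin 3)) then x j else u j)
        (fun j => if j ∈ ({0,1}:Finset (Fin 3)) then y j else u j)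
        = if x 0 = 1 ∧ x 1 = 1 ∧ y 0 = 0 ∧ y 1 = 0 then 1 else 0 := by
      intro u
      simp only [M2, Matrix.of_apply]
      refine if_congr ?_ rfl rfl
      simp [h0, h1, h2]
    rw [key z, key z']

theorem supp_one : SupportedOn 2 (∅ : Finset (Fin 3)) (1 : Matrix F3 F3 ℂ) := by
  constructor
  · rintro x y ⟨i, -, hne⟩
    exact Matrix.one_apply_ne (fun h => hne (congrFun h i))
  · intro x y z z'
    have key : ∀ (w u : F3), (fun i => if i ∈ (∅:Finset (Fin 3)) then w i else u i) = u := by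
      intro w u; funext i; simp
    rw [key x z, key y z, key x z', key y z']
    simp [Matrix.one_apply]

theorem M1_mem (i : Fin 3) (a b : Fin 2) : M1 i a b ∈ Vk (Fin 3) 2 1 :=
  Submodule.subset_span ⟨{i}, by simp, supp_M1 i a b⟩

theorem M2_mem : M2 ∈ Vk (Fin 3) 2 2 :=
  Submodule.subset_span ⟨{0,1}, by decide, supp_M2⟩

theorem one_mem_V0 : (1 : Matrix F3 F3 ℂ) ∈ Vk (Fin 3) 2 0 :=
  Submodule.subset_span ⟨∅, by simp, supp_one⟩

theorem gen_mem {ψ : F3 → ℂ} {k : ℕ} {M : Matrix F3 F3 ℂ} (hM : M ∈ Vk (Fin 3) 2 k) :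
    M.mulVec ψ ∈ Wk ψ k :=
  Submodule.subset_span ⟨M, hM, rfl⟩

theorem smul_mem_extract {c : ℂ} (hc : c ≠ 0) {W : Submodule ℂ (F3 → ℂ)} {w : F3 → ℂ}
    (h : c • w ∈ W) : w ∈ W := by
  have := W.smul_mem c⁻¹ h
  rwa [smul_smul, inv_mul_cancel₀ hc, one_smul] at this

-- vector computations
theorem vec000 (c : ℂ) : (M1 0 0 1).mulVec (wpsi c) = c • dlt ![0,0,0] := by
  have h := mulVec_formula (P := fun x y => x 0 = 0 ∧ y 0 = 1 ∧ ∀ j, j ≠ (0:Fin 3) → x j = y j)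
    c (fun x => if x = ![0,0,0] then 1 else 0) (by decide)
  refine h.trans ?_
  funext x
  simp only [dlt, Pi.smul_apply, smul_eq_mul]
  split_ifs <;> push_cast <;> ring

theorem vec100 (c : ℂ) : (M1 0 1 1).mulVec (wpsi c) = c • dlt ![1,0,0] := by
  have h := mulVec_formula (P := fun x y => x 0 = 1 ∧ y 0 = 1 ∧ ∀ j, j ≠ (0:Fin 3) → x j = y j)
    c (fun x => if x = ![1,0,0] then 1 else 0) (by decide)
  refine h.trans ?_
  funext x
  simp only [dlt, Pi.smul_apply, smul_eq_mul]
  split_ifs <;> push_cast <;> ring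

theorem vec010 (c : ℂ) : (M1 1 1 1).mulVec (wpsi c) = c • dlt ![0,1,0] := by
  have h := mulVec_formula (P := fun x y => x 1 = 1 ∧ y 1 = 1 ∧ ∀ j, j ≠ (1:Fin 3) → x j = y j)
    c (fun x => if x = ![0,1,0] then 1 else 0) (by decide)
  refine h.trans ?_
  funext x
  simp only [dlt, Pi.smul_apply, smul_eq_mul]
  split_ifs <;> push_cast <;> ring

theorem vec001 (c : ℂ) : (M1 2 1 1).mulVec (wpsi c) = c • dlt ![0,0,1] := by
  have h := mulVec_formula (P := fun x y => x 2 = 1 ∧ y 2 = 1 ∧ ∀ j, j ≠ (2:Fin 3) → x j = y j)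
    c (fun x => if x = ![0,0,1] then 1 else 0) (by decide)
  refine h.trans ?_
  funext x
  simp only [dlt, Pi.smul_apply, smul_eq_mul]
  split_ifs <;> push_cast <;> ring

theorem vecA (c : ℂ) : (M1 0 1 0).mulVec (wpsi c) = c • (dlt ![1,1,0] + dlt ![1,0,1]) := by
  have h := mulVec_formula (P := fun x y => x 0 = 1 ∧ y 0 = 0 ∧ ∀ j, j ≠ (0:Fin 3) → x j = y j)
    c (fun x => (if x = ![1,1,0] then 1 else 0) + (if x = ![1,0,1] then 1 else 0)) (by decide)
  refine h.trans ?_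
  funext x
  simp only [dlt, Pi.smul_apply, Pi.add_apply, smul_eq_mul]
  split_ifs <;> push_cast <;> ring

theorem vecB (c : ℂ) : (M1 1 1 0).mulVec (wpsi c) = c • (dlt ![1,1,0] + dlt ![0,1,1]) := by
  have h := mulVec_formula (P := fun x y => x 1 = 1 ∧ y 1 = 0 ∧ ∀ j, j ≠ (1:Fin 3) → x j = y j)
    c (fun x => (if x = ![1,1,0] then 1 else 0) + (if x = ![0,1,1] then 1 else 0)) (by decide)
  refine h.trans ?_
  funext x
  simp only [dlt, Pi.smul_apply, Pi.add_apply, smul_eq_mul]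
  split_ifs <;> push_cast <;> ring

theorem vecC (c : ℂ) : (M1 2 1 0).mulVec (wpsi c) = c • (dlt ![1,0,1] + dlt ![0,1,1]) := by
  have h := mulVec_formula (P := fun x y => x 2 = 1 ∧ y 2 = 0 ∧ ∀ j, j ≠ (2:Fin 3) → x j = y j)
    c (fun x => (if x = ![1,0,1] then 1 else 0) + (if x = ![0,1,1] then 1 else 0)) (by decide)
  refine h.trans ?_
  funext x
  simp only [dlt, Pi.smul_apply, Pi.add_apply, smul_eq_mul]
  split_ifs <;> push_cast <;> ring

theorem vec111 (c : ℂ) : M2.mulVec (wpsi c) = c • dlt ![1,1,1] := by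
  have h := mulVec_formula
    (P := fun x y => x 0 = 1 ∧ x 1 = 1 ∧ y 0 = 0 ∧ y 1 = 0 ∧ x 2 = y 2)
    c (fun x => if x = ![1,1,1] then 1 else 0) (by decide)
  refine h.trans ?_
  funext x
  simp only [dlt, Pi.smul_apply, smul_eq_mul]
  split_ifs <;> push_cast <;> ring

-- monotonicity
theorem Vk_mono {k k' : ℕ} (h : k ≤ k') : Vk (Fin 3) 2 k ≤ Vk (Fin 3) 2 k' :=
  Submodule.span_mono (fun M ⟨B, hB, hs⟩ => ⟨B, hB.trans h, hs⟩)

theorem Wk_mono {ψ : F3 → ℂ} {k k' : ℕ} (h : k ≤ k') : Wk ψ k ≤ Wk ψ k' :=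
  Submodule.span_mono (fun v ⟨M, hM, hv⟩ => ⟨M, Vk_mono h hM, hv⟩)

-- δ memberships in W1
theorem dlt_mem_W1 {c : ℂ} (hc : c ≠ 0) :
    ∀ a : F3, a ≠ (fun _ => 1) → dlt a ∈ Wk (wpsi c) 1 := by
  have cases8 : ∀ x : F3, x = ![0,0,0] ∨ x = ![0,0,1] ∨ x = ![0,1,0] ∨ x = ![1,0,0] ∨
      x = ![0,1,1] ∨ x = ![1,0,1] ∨ x = ![1,1,0] ∨ x = ![1,1,1] := by decide
  have hA : (M1 0 1 0).mulVec (wpsi c) ∈ Wk (wpsi c) 1 := gen_mem (M1_mem 0 1 0)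
  have hB : (M1 1 1 0).mulVec (wpsi c) ∈ Wk (wpsi c) 1 := gen_mem (M1_mem 1 1 0)
  have hC : (M1 2 1 0).mulVec (wpsi c) ∈ Wk (wpsi c) 1 := gen_mem (M1_mem 2 1 0)
  have h2c : (2 : ℂ) * c ≠ 0 := mul_ne_zero two_ne_zero hc
  intro a ha
  rcases cases8 a with h|h|h|h|h|h|h|h <;> subst h
  · exact smul_mem_extract hc ((vec000 c) ▸ gen_mem (M1_mem 0 0 1))
  · exact smul_mem_extract hc ((vec001 c) ▸ gen_mem (M1_mem 2 1 1))
  · exact smul_mem_extract hc ((vec010 c) ▸ gen_mem (M1_mem 1 1 1))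
  · exact smul_mem_extract hc ((vec100 c) ▸ gen_mem (M1_mem 0 1 1))
  · -- 011 = (B + C - A)/(2c)
    refine smul_mem_extract h2c (W := Wk (wpsi c) 1) ?_
    have key : ((2:ℂ) * c) • dlt ![0,1,1] =
        (M1 1 1 0).mulVec (wpsi c) + (M1 2 1 0).mulVec (wpsi c) - (M1 0 1 0).mulVec (wpsi c) := by
      rw [vecA, vecB, vecC]; module
    rw [key]; exact sub_mem (add_mem hB hC) hA
  · refine smul_mem_extract h2c (W := Wk (wpsi c) 1) ?_
    have key : ((2:ℂ) * c) • dlt ![1,0,1] =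
        (M1 0 1 0).mulVec (wpsi c) + (M1 2 1 0).mulVec (wpsi c) - (M1 1 1 0).mulVec (wpsi c) := by
      rw [vecA, vecB, vecC]; module
    rw [key]; exact sub_mem (add_mem hA hC) hB
  · refine smul_mem_extract h2c (W := Wk (wpsi c) 1) ?_
    have key : ((2:ℂ) * c) • dlt ![1,1,0] =
        (M1 0 1 0).mulVec (wpsi c) + (M1 1 1 0).mulVec (wpsi c) - (M1 2 1 0).mulVec (wpsi c) := by
      rw [vecA, vecB, vecC]; module
    rw [key]; exact sub_mem (add_mem hA hB) hC
  · exact absurd (by decide : (![1,1,1] : F3) = fun _ => 1) ha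

-- the kernel subspace
def Kker : Submodule ℂ (F3 → ℂ) :=
  LinearMap.ker (LinearMap.proj (R := ℂ) (φ := fun _ : F3 => ℂ) (fun _ => 1))

theorem mem_Kker {v : F3 → ℂ} : v ∈ Kker ↔ v (fun _ => 1) = 0 := by
  simp [Kker, LinearMap.mem_ker]

theorem ker_le_W1 {c : ℂ} (hc : c ≠ 0) :
    ∀ v : F3 → ℂ, v (fun _ => 1) = 0 → v ∈ Wk (wpsi c) 1 := by
  intro v hv
  have hrep : v = ∑ a ∈ Finset.univ.erase (fun _ => 1 : F3), v a • dlt a := by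
    funext x
    simp only [Finset.sum_apply, Pi.smul_apply, dlt, smul_eq_mul, mul_ite, mul_one, mul_zero]
    rw [Finset.sum_ite_eq]
    by_cases hx : x = (fun _ => 1 : F3)
    · rw [if_neg (by simp [hx])]; rw [hx, hv]
    · rw [if_pos (Finset.mem_erase.2 ⟨hx, Finset.mem_univ x⟩)]
  rw [hrep]
  exact Submodule.sum_mem _ (fun a ha =>
    Submodule.smul_mem _ _ (dlt_mem_W1 hc a (Finset.mem_erase.1 ha).1))

theorem W1_le_K {c : ℂ} : Wk (wpsi c) 1 ≤ Kker := by
  have fact1 : ∀ (B : Finset (Fin 3)), B.card ≤ 1 → ∀ y : Fin 3 → Fin 2,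
      (∑ i, (y i : ℕ)) = 1 → ∃ i, i ∉ B ∧ y i = 0 := by decide
  apply Submodule.span_le.2
  rintro v ⟨M, hM, rfl⟩
  have hV : Vk (Fin 3) 2 1 ≤ Submodule.comap (applyVec (wpsi c)) Kker := by
    apply Submodule.span_le.2
    rintro M ⟨B, hB, hs1, hs2⟩
    simp only [SetLike.mem_coe, Submodule.mem_comap]
    show M.mulVec (wpsi c) ∈ Kker
    rw [mem_Kker]
    show ∑ y, M (fun _ => 1) y * wpsi c y = 0
    apply Finset.sum_eq_zero
    intro y _
    by_cases hy : (∑ i, (y i : ℕ)) = 1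
    · obtain ⟨i, hiB, hi⟩ := fact1 B hB y hy
      rw [hs1 _ _ ⟨i, hiB, by simp [hi]⟩, zero_mul]
    · simp [wpsi, hy]
  exact hV hM

theorem W1_eq {c : ℂ} (hc : c ≠ 0) : Wk (wpsi c) 1 = Kker := by
  refine le_antisymm W1_le_K ?_
  intro v hv
  exact ker_le_W1 hc v (mem_Kker.1 hv)

theorem W2_eq {c : ℂ} (hc : c ≠ 0) : Wk (wpsi c) 2 = ⊤ := by
  rw [Submodule.eq_top_iff']
  intro v
  have h12 : Wk (wpsi c) 1 ≤ Wk (wpsi c) 2 := Wk_mono (by norm_num)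
  have hd : dlt ![1,1,1] ∈ Wk (wpsi c) 2 :=
    smul_mem_extract hc ((vec111 c) ▸ gen_mem M2_mem)
  have hsplit : v = (v - v (fun _ => 1) • dlt ![1,1,1]) + v (fun _ => 1) • dlt ![1,1,1] := by
    rw [sub_add_cancel]
  rw [hsplit]
  refine add_mem (h12 (ker_le_W1 hc _ ?_)) (Submodule.smul_mem _ _ hd)
  simp [dlt, show ((fun _ => 1 : F3) = ![1,1,1]) from by decide]

theorem W3_eq {c : ℂ} (hc : c ≠ 0) : Wk (wpsi c) 3 = ⊤ :=
  top_le_iff.1 ((W2_eq hc).symm.trans_le (Wk_mono (by norm_num)))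

theorem W0_eq {c : ℂ} : Wk (wpsi c) 0 = Submodule.span ℂ {wpsi c} := by
  refine le_antisymm ?_ ?_
  · apply Submodule.span_le.2
    rintro v ⟨M, hM, rfl⟩
    have hV : Vk (Fin 3) 2 0 ≤ Submodule.comap (applyVec (wpsi c))
        (Submodule.span ℂ {wpsi c}) := by
      apply Submodule.span_le.2
      rintro M ⟨B, hB, hs1, hs2⟩
      simp only [SetLike.mem_coe, Submodule.mem_comap]
      show M.mulVec (wpsi c) ∈ Submodule.span ℂ {wpsi c}
      have hB0 : B = ∅ := Finset.card_eq_zero.1 (Nat.le_zero.1 hB)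
      subst hB0
      have hdiag : ∀ x : F3, M x x = M (fun _ => 0) (fun _ => 0) := by
        intro x
        simpa using hs2 x x x (fun _ => 0)
      have hM : M.mulVec (wpsi c) = M (fun _ => 0) (fun _ => 0) • wpsi c := by
        funext x
        show ∑ y, M x y * wpsi c y = _
        rw [Finset.sum_eq_single x]
        · rw [hdiag x]; rfl
        · intro b _ hb
          rw [hs1 x b ⟨(Function.ne_iff.1 (Ne.symm hb)).choose, Finset.notMem_empty _,
            (Function.ne_iff.1 (Ne.symm hb)).choose_spec⟩, zero_mul]
        · intro hx; exact absurd (Finset.mem_univ x) hx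
      rw [hM]
      exact Submodule.smul_mem _ _ (Submodule.mem_span_singleton_self _)
    exact hV hM
  · rw [Submodule.span_le, Set.singleton_subset_iff]
    exact Submodule.subset_span ⟨1, one_mem_V0, (Matrix.one_mulVec _).symm⟩

theorem finrank_F3fun : Module.finrank ℂ (F3 → ℂ) = 8 := by
  rw [Module.finrank_fintype_fun_eq_card]
  simp [Fintype.card_fun]

theorem finrank_Kker : Module.finrank ℂ Kker = 7 := by
  have h := LinearMap.finrank_range_add_finrank_ker
    (LinearMap.proj (R := ℂ) (φ := fun _ : F3 => ℂ) (fun _ => 1))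
  have hr : LinearMap.range (LinearMap.proj (R := ℂ) (φ := fun _ : F3 => ℂ) (fun _ => 1)) = ⊤ :=
    LinearMap.range_eq_top.2 (fun z => ⟨fun _ => z, rfl⟩)
  rw [hr, finrank_top, Module.finrank_self, finrank_F3fun] at h
  have : Module.finrank ℂ ↥(LinearMap.ker
      (LinearMap.proj (R := ℂ) (φ := fun _ : F3 => ℂ) (fun _ => 1 : F3))) = 7 := by omega
  exact this

theorem wpsi_ne_zero {c : ℂ} (hc : c ≠ 0) : wpsi c ≠ 0 := by
  intro h
  have := congrFun h ![1,0,0]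
  simp only [wpsi, Pi.zero_apply] at this
  rw [if_pos (by decide)] at this
  exact hc this

theorem dim0 {c : ℂ} (hc : c ≠ 0) : dimW (wpsi c) 0 = 1 := by
  rw [dimW, W0_eq]
  exact finrank_span_singleton (wpsi_ne_zero hc)

theorem dim1 {c : ℂ} (hc : c ≠ 0) : dimW (wpsi c) 1 = 7 := by
  rw [dimW, W1_eq hc]; exact finrank_Kker

theorem dim2 {c : ℂ} (hc : c ≠ 0) : dimW (wpsi c) 2 = 8 := by
  rw [dimW, W2_eq hc, finrank_top]; exact finrank_F3fun

theorem dim3 {c : ℂ} (hc : c ≠ 0) : dimW (wpsi c) 3 = 8 := by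
  rw [dimW, W3_eq hc, finrank_top]; exact finrank_F3fun

end EntAux


open Polynomial in
/-- For the three-qubit W state `(|100⟩+|010⟩+|001⟩)/√3`, the entanglement
polynomial is `1 + 6x + x²`: `dim W_0 = 1`, `dim W_1 = 7`, `dim W_2 = 8`; in particular
1-local operators acting on the W state span only a 7-dimensional subspace of `(ℂ²)^{⊗3}`. -/
theorem entPoly_Wstate (ψ : (Fin 3 → Fin 2) → ℂ)
    (hψ : ψ = fun x => if (∑ i, (x i : ℕ)) = 1 then ((Real.sqrt 3 : ℂ))⁻¹ else 0) :
    entPoly ψ = C 1 + C 6 * X + X ^ 2 ∧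
      dimW ψ 0 = 1 ∧ dimW ψ 1 = 7 ∧ dimW ψ 2 = 8 := by
  have hc : ((Real.sqrt 3 : ℂ))⁻¹ ≠ 0 := by
    apply inv_ne_zero
    exact_mod_cast Complex.ofReal_ne_zero.2 (Real.sqrt_ne_zero'.2 (by norm_num))
  have hψ' : ψ = wpsi ((Real.sqrt 3 : ℂ))⁻¹ := hψ
  subst hψ'
  have h0 := dim0 hc
  have h1 := dim1 hc
  have h2 := dim2 hc
  have h3 := dim3 hc
  refine ⟨?_, h0, h1, h2⟩
  rw [entPoly]
  have hcard : Fintype.card (Fin 3) + 1 = 4 := by simp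
  rw [hcard]
  rw [Finset.sum_range_succ, Finset.sum_range_succ, Finset.sum_range_succ,
    Finset.sum_range_succ]
  simp only [deltaDimW, h0, h1, h2, h3]
  norm_num
end
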